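/- Let Γ ⊆ Γ' be closed subspaces of a complex Hilbert space Ĥ, β = Γ' ∩ Γ^⊥, and let M be a closed subspace of Ĥ that is transversal to (Γ,Γ'), i.e. M + Γ is closed, M ∩ Γ = 0, and M + Γ' = Ĥ. Then for every closed subspace L ⊆ β, the pair (γ^{-1}(L), M) = (L + Γ, M) is a transversal pair of subspaces of Ĥ if and only if (L, γ_!M) is a transversal pair of subspaces of β. -/

import Mathlib

noncomputable section

open Classical in
/-- Orthogonal projection onto a closed (complete) submodule, as a continuous linear map
on the ambient space (defined to be `0` on non-complete submodules). -/
noncomputable def orthProj {W : Type*} [NormedAddCommGroup W] [InnerProductSpace ℂ W]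
    (M : Submodule ℂ W) : W →L[ℂ] W :=
  if h : IsComplete (M : Set W) then
    haveI : CompleteSpace M := h.completeSpace_coe
    M.subtypeL.comp (M.orthogonalProjectionOnto)
  else 0

/-- `(M, N)` is a Fredholm pair of subspaces of `W`: the sum is closed, the intersection
is finite-dimensional and the sum has finite codimension. -/
def FredholmPair {W : Type*} [NormedAddCommGroup W] [InnerProductSpace ℂ W]
    (M N : Submodule ℂ W) : Prop :=
  IsClosed ((M ⊔ N : Submodule ℂ W) : Set W) ∧
  FiniteDimensional ℂ ↥(M ⊓ N) ∧
  FiniteDimensional ℂ (W ⧸ (M ⊔ N))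

/-- `(M, N)` is a transversal pair of subspaces of `W`. -/
def TransversalPair {W : Type*} [NormedAddCommGroup W] [InnerProductSpace ℂ W]
    (M N : Submodule ℂ W) : Prop :=
  M ⊓ N = ⊥ ∧ M ⊔ N = ⊤

/-- `(L, N)` is a Fredholm pair of subspaces of the subspace `β` of `W` (the codimension
is computed inside `β`). -/
def FredholmPairIn {W : Type*} [NormedAddCommGroup W] [InnerProductSpace ℂ W]
    (β L N : Submodule ℂ W) : Prop :=
  IsClosed ((L ⊔ N : Submodule ℂ W) : Set W) ∧
  FiniteDimensional ℂ ↥(L ⊓ N) ∧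
  FiniteDimensional ℂ (↥β ⧸ Submodule.comap β.subtype (L ⊔ N))

/-- `(L, N)` is a transversal pair of subspaces of the subspace `β` of `W`. -/
def TransversalPairIn {W : Type*} [NormedAddCommGroup W] [InnerProductSpace ℂ W]
    (β L N : Submodule ℂ W) : Prop :=
  L ⊓ N = ⊥ ∧ L ⊔ N = β

/-- The push-forward `γ_!M = γ(M ∩ Γ')`, where `β = Γ' ∩ Γ^⊥` and `γ` is the restriction
to `Γ'` of the orthogonal projection onto `β`. -/
def gammaPush {W : Type*} [NormedAddCommGroup W] [InnerProductSpace ℂ W]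
    (Γ Γ' M : Submodule ℂ W) : Submodule ℂ W :=
  (M ⊓ Γ').map (orthProj (Γ' ⊓ Γᗮ) : W →ₗ[ℂ] W)

/-- `M` is Fredholm with respect to `(Γ, Γ')`: the pair `(M, Γ)` is lower semi-Fredholm
and the pair `(M, Γ')` is upper semi-Fredholm. -/
def FredholmWrt {W : Type*} [NormedAddCommGroup W] [InnerProductSpace ℂ W]
    (Γ Γ' M : Submodule ℂ W) : Prop :=
  (IsClosed ((M ⊔ Γ : Submodule ℂ W) : Set W) ∧ FiniteDimensional ℂ ↥(M ⊓ Γ)) ∧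
  (IsClosed ((M ⊔ Γ' : Submodule ℂ W) : Set W) ∧ FiniteDimensional ℂ (W ⧸ (M ⊔ Γ')))

/-- `M` is transversal to `(Γ, Γ')`: `M + Γ` is closed, `M ∩ Γ = 0` and `M + Γ' = W`. -/
def TransversalWrt {W : Type*} [NormedAddCommGroup W] [InnerProductSpace ℂ W]
    (Γ Γ' M : Submodule ℂ W) : Prop :=
  IsClosed ((M ⊔ Γ : Submodule ℂ W) : Set W) ∧ M ⊓ Γ = ⊥ ∧ M ⊔ Γ' = ⊤

/-- with `β = Γ' ∩ Γ^⊥`, if `M` is transversal to `(Γ, Γ')`, then for every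
closed `L ⊆ β`, the pair `(L + Γ, M)` is a transversal pair of subspaces of `Ĥ` iff
`(L, γ_!M)` is a transversal pair of subspaces of `β`. -/
theorem statement_12
    {W : Type*} [NormedAddCommGroup W] [InnerProductSpace ℂ W] [CompleteSpace W]
    (Γ Γ' M : Submodule ℂ W)
    (hΓ : IsClosed ((Γ : Submodule ℂ W) : Set W))
    (hΓ' : IsClosed ((Γ' : Submodule ℂ W) : Set W))
    (hle : Γ ≤ Γ')
    (hM : IsClosed ((M : Submodule ℂ W) : Set W))
    (hMT : TransversalWrt Γ Γ' M) :
    ∀ L : Submodule ℂ W, IsClosed ((L : Submodule ℂ W) : Set W) → L ≤ Γ' ⊓ Γᗮ →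
      (TransversalPair (L ⊔ Γ) M ↔
        TransversalPairIn (Γ' ⊓ Γᗮ) L (gammaPush Γ Γ' M)) := by
  intro L hLc hLβ
  set β : Submodule ℂ W := Γ' ⊓ Γᗮ with hβ
  have hβc : IsClosed (β : Set W) := hΓ'.inter Γ.isClosed_orthogonal
  haveI : CompleteSpace β := hβc.completeSpace_coe
  -- the projection
  have hPdef : ∀ x : W, orthProj β x = (β.orthogonalProjectionOnto x : W) := by
    intro x; rw [orthProj, dif_pos hβc.isComplete]; rfl
  have hPmem : ∀ x : W, orthProj β x ∈ β := by
    intro x; rw [hPdef]; exact (β.orthogonalProjectionOnto x).2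
  have hPβ : ∀ x ∈ β, orthProj β x = x := by
    intro x hx; rw [hPdef]; exact Submodule.starProjection_eq_self_iff.mpr hx
  have hΓβperp : Γ ≤ βᗮ := by
    refine le_trans Γ.le_orthogonal_orthogonal (Submodule.orthogonal_le ?_)
    exact inf_le_right
  have hPΓ : ∀ x ∈ Γ, orthProj β x = 0 := by
    intro x hx
    rw [hPdef]
    have : β.orthogonalProjectionOnto x = 0 :=
      Submodule.orthogonalProjectionOnto_apply_of_mem_orthogonal (hΓβperp hx)
    rw [this]; simp
  -- decomposition Γ' = Γ ⊔ β
  haveI : CompleteSpace Γ := hΓ.completeSpace_coe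
  have hsup : Γ ⊔ β = Γ' := by
    rw [hβ, inf_comm]
    exact Submodule.sup_orthogonal_inf_of_hasOrthogonalProjection hle
  have hβle : β ≤ Γ' := inf_le_left
  have hLΓ' : L ≤ Γ' := le_trans hLβ hβle
  -- membership in gammaPush
  have hNmem : ∀ x, x ∈ gammaPush Γ Γ' M ↔ ∃ m, m ∈ M ⊓ Γ' ∧ orthProj β m = x := by
    intro x; simp [gammaPush, Submodule.mem_map]; rfl
  have hNβ : gammaPush Γ Γ' M ≤ β := by
    intro x hx
    obtain ⟨m, _, rfl⟩ := (hNmem x).mp hx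
    exact hPmem m
  obtain ⟨-, hMΓ, hMΓ'⟩ := hMT
  constructor
  · rintro ⟨hinf, hsup'⟩
    constructor
    · -- L ⊓ N = ⊥
      rw [eq_bot_iff]
      rintro x ⟨hxL, hxN⟩
      obtain ⟨m, hm, rfl⟩ := (hNmem _).mp hxN
      -- m = (m - Pm) + Pm, with m - Pm ∈ Γ
      have hmΓ' : m ∈ Γ' := hm.2
      have hmdec : m - orthProj β m ∈ Γ := by
        rw [← hsup] at hmΓ'
        obtain ⟨g, hg, b, hb, hgb⟩ := Submodule.mem_sup.mp hmΓ'
        have : orthProj β m = b := by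
          rw [← hgb, map_add, hPΓ g hg, hPβ b hb, zero_add]
        rw [this, ← hgb]; simpa using hg
      have hmLΓ : m ∈ L ⊔ Γ := by
        have : m = orthProj β m + (m - orthProj β m) := by abel
        rw [this]
        exact Submodule.add_mem_sup hxL hmdec
      have : m ∈ (L ⊔ Γ) ⊓ M := ⟨hmLΓ, hm.1⟩
      rw [hinf] at this
      simp only [Submodule.mem_bot] at this
      simp [this]
    · -- L ⊔ N = β
      refine le_antisymm (sup_le hLβ hNβ) ?_
      intro b hb
      have : b ∈ (L ⊔ Γ) ⊔ M := by rw [hsup']; trivial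
      rw [sup_assoc] at this
      obtain ⟨l, hl, y, hy, hly⟩ := Submodule.mem_sup.mp this
      obtain ⟨g, hg, m, hm, hgm⟩ := Submodule.mem_sup.mp hy
      have hmΓ' : m ∈ Γ' := by
        have : m = b - l - g := by rw [← hly, ← hgm]; abel
        rw [this]
        exact Submodule.sub_mem _ (Submodule.sub_mem _ (hβle hb) (hLΓ' hl)) (hle hg)
      have hPmN : orthProj β m ∈ gammaPush Γ Γ' M := (hNmem _).mpr ⟨m, ⟨hm, hmΓ'⟩, rfl⟩
      have hb' : b = l + orthProj β m := by
        have h1 := congrArg (orthProj β) hly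
        rw [map_add, ← hgm, map_add, hPΓ g hg, zero_add, hPβ l (hLβ hl), hPβ b hb] at h1
        exact h1.symm
      rw [hb']
      exact Submodule.add_mem_sup hl hPmN
  · rintro ⟨hinf, hsup'⟩
    constructor
    · -- (L ⊔ Γ) ⊓ M = ⊥
      rw [eq_bot_iff]
      rintro x ⟨hxLΓ, hxM⟩
      obtain ⟨l, hl, g, hg, hlg⟩ := Submodule.mem_sup.mp hxLΓ
      have hxΓ' : x ∈ Γ' := by rw [← hlg]; exact Submodule.add_mem _ (hLΓ' hl) (hle hg)
      have hPx : orthProj β x = l := by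
        rw [← hlg, map_add, hPΓ g hg, add_zero, hPβ l (hLβ hl)]
      have hlN : l ∈ L ⊓ gammaPush Γ Γ' M :=
        ⟨hl, (hNmem _).mpr ⟨x, ⟨hxM, hxΓ'⟩, hPx⟩⟩
      rw [hinf] at hlN
      simp only [Submodule.mem_bot] at hlN
      have hxΓ : x ∈ M ⊓ Γ := by
        refine ⟨hxM, ?_⟩
        have : x = g := by rw [← hlg, hlN, zero_add]
        rw [this]; exact hg
      rw [hMΓ] at hxΓ
      simpa using hxΓ
    · -- (L ⊔ Γ) ⊔ M = ⊤
      rw [eq_top_iff, ← hMΓ']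
      refine sup_le ?_ ?_
      · -- M ≤ ...
        exact le_sup_right
      · -- Γ' ≤ (L ⊔ Γ) ⊔ M
        intro y hy
        rw [← hsup] at hy
        obtain ⟨g, hg, b, hb, hgb⟩ := Submodule.mem_sup.mp hy
        have hbβ : b ∈ β := hb
        have : b ∈ L ⊔ gammaPush Γ Γ' M := by rw [hsup']; exact hbβ
        obtain ⟨l, hl, n, hn, hln⟩ := Submodule.mem_sup.mp this
        obtain ⟨m, hm, rfl⟩ := (hNmem n).mp hn
        -- Pm = m - (m - Pm), m - Pm ∈ Γ
        have hmdec : m - orthProj β m ∈ Γ := by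
          have hmΓ' : m ∈ Γ' := hm.2
          rw [← hsup] at hmΓ'
          obtain ⟨g', hg', b', hb', hgb'⟩ := Submodule.mem_sup.mp hmΓ'
          have : orthProj β m = b' := by
            rw [← hgb', map_add, hPΓ g' hg', hPβ b' hb', zero_add]
          rw [this, ← hgb']; simpa using hg'
        have hy' : y = l + (g - (m - orthProj β m)) + m := by
          rw [← hgb, ← hln]; abel
        rw [hy']
        refine Submodule.add_mem _ ?_ (Submodule.mem_sup_right hm.1)
        refine Submodule.mem_sup_left ?_
        exact Submodule.add_mem_sup hl (Submodule.sub_mem _ hg hmdec)
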